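/- arXiv:1002.4243 — 4 statements merged into one kernel-verified Lean document; each statement's English description precedes it below -/
import Mathlib

section
/- Let L be a first-order functional language (no relation symbols) containing at least one constant symbol, and let B be an L-algebra. If the trivial (one-element) L-algebra satisfies every universal sentence true in B, then B has a trivial (one-element) subalgebra. -/
open FirstOrder Language

/-- The trivial (one-element) `L`-structure on `Unit`. -/
instance trivialStructure (L : FirstOrder.Language) : L.Structure Unit :=
  ⟨fun _ _ => (), fun _ _ => True⟩

/-- If `L` is a functional language (no relation symbols) with at least one constant
symbol, `B` is an `L`-algebra, and the trivial one-element `L`-algebra satisfies every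
universal sentence true in `B`, then `B` has a trivial (one-element) subalgebra. -/
theorem stmt0 (L : FirstOrder.Language) (B : Type*) [L.Structure B]
    (hfunc : ∀ n, IsEmpty (L.Relations n)) (hconst : Nonempty L.Constants)
    (h : ∀ (n : ℕ) (ψ : L.BoundedFormula Empty n), ψ.IsQF →
      (B ⊨ ψ.alls) → (Unit ⊨ ψ.alls)) :
    ∃ b : B, ∀ (n : ℕ) (f : L.Functions n), Structure.funMap f (fun _ => b) = b := by
  by_contra hb
  push_neg at hb
  obtain ⟨c⟩ := hconst
  obtain ⟨n, f, hf⟩ := hb (Structure.funMap c (default : Fin 0 → B))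
  set t0 : L.Term (Empty ⊕ Fin 0) := Constants.term c with ht0
  set ψ : L.BoundedFormula Empty 0 :=
    BoundedFormula.not (Term.bdEqual (Term.func f (fun _ => t0)) t0) with hψ
  have hqf : ψ.IsQF := (BoundedFormula.IsAtomic.equal _ _).isQF.not
  have hB : B ⊨ ψ.alls := by
    show ψ.Realize _ _
    simp only [hψ, BoundedFormula.realize_not, BoundedFormula.realize_bdEqual, Term.realize_func,
      ht0, Term.realize_constants]
    exact hf
  have hU : ¬ (Unit ⊨ ψ.alls) := by
    show ¬ ψ.Realize _ _
    simp [hψ, BoundedFormula.realize_not, BoundedFormula.realize_bdEqual]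
  exact hU (h 0 ψ hqf hB)
end

section
/- Let B be an L-algebra. The set At_L({x}) of all atomic formulas in one variable x is finitely satisfiable in B (every finite subset is realized by some element of B) if and only if the trivial one-element L-algebra lies in the universal closure of B (i.e., satisfies every universal sentence true in B). -/
/-!
In the one-element algebra every equation holds. Hence, if `b ∈ B` satisfies the finitely many
equations `t(x) = s(x)` obtained from the atoms of a quantifier-free `ψ` by identifying all its
variables with `x`, then `ψ(b, …, b)` holds in `B` exactly when `ψ` holds in `Unit`; so a universal
sentence true in `B` is true in `Unit`. Conversely, if a finite set `S₀` of equations had no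
solution in `B`, then `∀ x, ¬ ⋀ S₀` would be a universal sentence true in `B` and false in `Unit`.
-/

open FirstOrder Language

namespace FirstOrder.Language

variable {L : Language} {α β : Type*} {n : ℕ} {M : Type*} [L.Structure M]

theorem BoundedFormula.IsQF.iInf [Finite β] {f : β → L.BoundedFormula α n}
    (hf : ∀ b, (f b).IsQF) : (BoundedFormula.iInf f).IsQF := by
  let _ := Fintype.ofFinite β
  suffices ∀ l : List β, ((l.map f).foldr (· ⊓ ·) ⊤).IsQF from this _
  intro l
  induction l with
  | nil => exact IsQF.top
  | cons b l ih => exact (hf b).inf ih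

theorem BoundedFormula.IsQF.exists_finset_realize_const_iff_unit
    (hrel : ∀ n, IsEmpty (L.Relations n)) {φ : L.BoundedFormula α n} (hφ : φ.IsQF) :
    ∃ S : Finset (L.Term Unit × L.Term Unit), ∀ b : M,
      (∀ p ∈ S, p.1.realize (fun _ => b) = p.2.realize (fun _ => b)) →
      (φ.Realize (fun _ => b) (fun _ => b) ↔ φ.Realize (M := Unit) (fun _ => ()) (fun _ => ())) := by
  classical
  induction hφ with
  | falsum => exact ⟨∅, fun _ _ => Iff.rfl⟩
  | of_isAtomic h =>
    cases h with
    | equal t₁ t₂ =>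
      refine ⟨{(t₁.relabel fun _ => (), t₂.relabel fun _ => ())}, fun b hb => ?_⟩
      have hb₁ := hb _ (Finset.mem_singleton_self _)
      simp only [Term.realize_relabel, Function.comp_def] at hb₁
      refine iff_of_true ?_ (Subsingleton.elim _ _)
      simpa only [BoundedFormula.realize_bdEqual, Sum.elim_lam_const_lam_const] using hb₁
    | rel R _ => exact (hrel _).elim R
  | imp _ _ ih₁ ih₂ =>
    obtain ⟨S₁, hS₁⟩ := ih₁
    obtain ⟨S₂, hS₂⟩ := ih₂
    refine ⟨S₁ ∪ S₂, fun b hb => ?_⟩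
    simp only [BoundedFormula.realize_imp]
    rw [hS₁ b fun p hp => hb p (Finset.mem_union_left _ hp),
      hS₂ b fun p hp => hb p (Finset.mem_union_right _ hp)]

noncomputable def Formula.iInfEquations (S : Finset (L.Term α × L.Term α)) : L.Formula α :=
  Formula.iInf fun p : S => Term.equal p.1.1 p.1.2

theorem Formula.realize_iInfEquations (S : Finset (L.Term α × L.Term α)) (v : α → M) :
    (Formula.iInfEquations S).Realize v ↔ ∀ p ∈ S, p.1.realize v = p.2.realize v := by
  simp [Formula.iInfEquations]

theorem Formula.isQF_iInfEquations (S : Finset (L.Term α × L.Term α)) :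
    (Formula.iInfEquations S).IsQF :=
  BoundedFormula.IsQF.iInf fun _ => (BoundedFormula.IsAtomic.equal _ _).isQF

noncomputable def Sentence.unsolvable (S : Finset (L.Term Unit × L.Term Unit)) : L.Sentence :=
  Formula.iAlls Unit ∼((Formula.iInfEquations S).relabel Sum.inr)

theorem Sentence.realize_unsolvable (S : Finset (L.Term Unit × L.Term Unit)) :
    M ⊨ Sentence.unsolvable S ↔
      ∀ x : M, ¬ ∀ p ∈ S, p.1.realize (fun _ => x) = p.2.realize (fun _ => x) := by
  simp only [Sentence.unsolvable, Sentence.Realize, Formula.realize_iAlls, Formula.realize_not,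
    Formula.realize_relabel, Sum.elim_comp_inr, Formula.realize_iInfEquations]
  exact ⟨fun h x => h fun _ => x, fun h x => h (x ())⟩

end FirstOrder.Language

/-- For a functional language `L` and an `L`-algebra `B`: the set `At_L({x})` of all
atomic formulas in one variable is finitely satisfiable in `B` if and only if the trivial
one-element `L`-algebra satisfies every universal sentence true in `B` (i.e. lies in the
universal closure of `B`). -/
theorem stmt3 (L : FirstOrder.Language) (B : Type*) [L.Structure B]
    (hrel : ∀ n, IsEmpty (L.Relations n)) :
    (∀ S₀ : Finset (L.Term Unit × L.Term Unit), ∃ b : B,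
        ∀ p ∈ S₀, p.1.realize (fun _ => b) = p.2.realize (fun _ => b)) ↔
      ∀ (n : ℕ) (ψ : L.BoundedFormula Empty n), ψ.IsQF →
        (B ⊨ ψ.alls) → (Unit ⊨ ψ.alls) := by
  constructor
  · intro h n ψ hψ hB
    obtain ⟨S, hS⟩ := hψ.exists_finset_realize_const_iff_unit hrel (M := B)
    obtain ⟨b, hb⟩ := h S
    have hψb := BoundedFormula.realize_alls.1 hB (fun _ => b)
    rw [Subsingleton.elim default (fun _ => b), hS b hb] at hψb
    exact BoundedFormula.realize_alls.2 fun xs => by convert hψb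
  · intro h S₀
    by_contra! hS₀
    have hU : Unit ⊨ Sentence.unsolvable S₀ :=
      h _ _ (((Formula.isQF_iInfEquations S₀).relabel _).not.relabel _)
        ((Sentence.realize_unsolvable S₀).2 fun x hx => by
          obtain ⟨p, hp, hne⟩ := hS₀ x
          exact hne (hx p hp))
    exact (Sentence.realize_unsolvable S₀).1 hU () fun _ _ => rfl
end

section
/- Every equationally Noetherian L-algebra is u_ω-compact, and every u_ω-compact L-algebra is q_ω-compact. -/
open FirstOrder Language

variable (L : FirstOrder.Language)

/-- The solution set in `B` of a system of equations `S` in `n` variables. -/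
def solSet (B : Type*) [L.Structure B] {n : ℕ}
    (S : Set (L.Term (Fin n) × L.Term (Fin n))) : Set (Fin n → B) :=
  {v | ∀ p ∈ S, p.1.realize v = p.2.realize v}

/-- `B` is equationally Noetherian: every system has a finite subsystem with the same
solution set. -/
def eqNoetherian (B : Type*) [L.Structure B] : Prop :=
  ∀ (n : ℕ) (S : Set (L.Term (Fin n) × L.Term (Fin n))),
    ∃ S₀ : Finset (L.Term (Fin n) × L.Term (Fin n)),
      ↑S₀ ⊆ S ∧ solSet L B ↑S₀ = solSet L B S

/-- `B` is `u_ω`-compact. -/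
def uOmegaCompact (B : Type*) [L.Structure B] : Prop :=
  ∀ (n : ℕ) (S : Set (L.Term (Fin n) × L.Term (Fin n)))
    (m : ℕ) (t s : Fin m → L.Term (Fin n)),
    solSet L B S ⊆ (⋃ i, solSet L B {(t i, s i)}) →
      ∃ S₀ : Finset (L.Term (Fin n) × L.Term (Fin n)),
        ↑S₀ ⊆ S ∧ solSet L B ↑S₀ ⊆ ⋃ i, solSet L B {(t i, s i)}

/-- `B` is `q_ω`-compact (the case `m = 1`). -/
def qOmegaCompact (B : Type*) [L.Structure B] : Prop :=
  ∀ (n : ℕ) (S : Set (L.Term (Fin n) × L.Term (Fin n)))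
    (e : L.Term (Fin n) × L.Term (Fin n)),
    solSet L B S ⊆ solSet L B {e} →
      ∃ S₀ : Finset (L.Term (Fin n) × L.Term (Fin n)),
        ↑S₀ ⊆ S ∧ solSet L B ↑S₀ ⊆ solSet L B {e}

/-- Every equationally Noetherian `L`-algebra is `u_ω`-compact, and every `u_ω`-compact
`L`-algebra is `q_ω`-compact. -/
theorem stmt7 (B : Type*) [L.Structure B] :
    (eqNoetherian L B → uOmegaCompact L B) ∧
      (uOmegaCompact L B → qOmegaCompact L B) := by
  constructor
  · intro hN n S m t s hsub
    obtain ⟨S₀, hsub₀, heq⟩ := hN n S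
    exact ⟨S₀, hsub₀, heq ▸ hsub⟩
  · intro hU n S e hsub
    obtain ⟨S₀, hsub₀, h⟩ := hU n S 1 (fun _ => e.1) (fun _ => e.2)
      (by simpa using hsub.trans (le_of_eq (by
        simp [Set.iUnion_const])))
    refine ⟨S₀, hsub₀, h.trans ?_⟩
    simp [Set.iUnion_const]
end

section
/- If an L-algebra B is both weakly equationally Noetherian and q_ω-compact, then B is equationally Noetherian. -/
open FirstOrder Language

variable (L : FirstOrder.Language)

/-- If `B` is weakly equationally Noetherian (every system is equivalent over `B` to some
finite system, not necessarily a subsystem) and `q_ω`-compact, then `B` is equationally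
Noetherian (every system is equivalent over `B` to a finite subsystem). -/
theorem stmt10 (B : Type*) [L.Structure B]
    (hwen : ∀ (n : ℕ) (S : Set (L.Term (Fin n) × L.Term (Fin n))),
      ∃ S₀ : Finset (L.Term (Fin n) × L.Term (Fin n)),
        solSet L B ↑S₀ = solSet L B S)
    (hq : ∀ (n : ℕ) (S : Set (L.Term (Fin n) × L.Term (Fin n)))
      (e : L.Term (Fin n) × L.Term (Fin n)),
      solSet L B S ⊆ solSet L B {e} →
        ∃ S' : Finset (L.Term (Fin n) × L.Term (Fin n)),
          ↑S' ⊆ S ∧ solSet L B ↑S' ⊆ solSet L B {e}) :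
    ∀ (n : ℕ) (S : Set (L.Term (Fin n) × L.Term (Fin n))),
      ∃ S₀ : Finset (L.Term (Fin n) × L.Term (Fin n)),
        ↑S₀ ⊆ S ∧ solSet L B ↑S₀ = solSet L B S := by
  intro n S
  classical
  obtain ⟨F, hF⟩ := hwen n S
  -- for each e ∈ F, solSet S ⊆ solSet {e}
  have key : ∀ e ∈ F, ∃ S' : Finset (L.Term (Fin n) × L.Term (Fin n)),
      ↑S' ⊆ S ∧ solSet L B ↑S' ⊆ solSet L B {e} := by
    intro e he
    apply hq n S e
    intro v hv
    intro p hp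
    rw [Set.mem_singleton_iff] at hp
    subst hp
    have : v ∈ solSet L B ↑F := by rw [hF]; exact hv
    exact this p he
  choose f hf₁ hf₂ using key
  refine ⟨F.attach.biUnion (fun e => f e.1 e.2), ?_, ?_⟩
  · intro x hx
    simp only [Finset.coe_biUnion, Set.mem_iUnion, Finset.mem_coe] at hx
    obtain ⟨e, _, hx⟩ := hx
    exact hf₁ e.1 e.2 hx
  · apply Set.Subset.antisymm
    · intro v hv
      rw [← hF]
      intro e he
      refine hf₂ e he ?_ e rfl
      intro p hp
      apply hv
      simp only [Finset.coe_biUnion, Set.mem_iUnion, Finset.mem_coe]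
      exact ⟨⟨e, he⟩, F.mem_attach _, hp⟩
    · intro v hv p hp
      simp only [Finset.coe_biUnion, Set.mem_iUnion, Finset.mem_coe] at hp
      obtain ⟨e, _, hp⟩ := hp
      exact hv p (hf₁ e.1 e.2 hp)
end
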